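/- Under the hypotheses of the previous identity (u solving the Monge–Ampère equation det(D²u) = e^{-(2m+2)(tu+(1-t)u⁰)} with gradient image Σ), the point -(t/(1-t))·P_c lies in Σ, where P_c is the barycenter of the bounded open convex set Σ. -/
import Mathlib


open MeasureTheory

theorem stmt7 (m : ℕ) (S : Set (EuclideanSpace ℝ (Fin m)))
    (hopen : IsOpen S) (hconv : Convex ℝ S) (hbdd : Bornology.IsBounded S)
    (g : EuclideanSpace ℝ (Fin m) → EuclideanSpace ℝ (Fin m))
    (hgmeas : Measurable g) (hgS : ∀ x, g x ∈ S)
    (ρ : EuclideanSpace ℝ (Fin m) → ℝ)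
    (hρpos : ∀ x, 0 < ρ x) (hρmeas : Measurable ρ) (hρint : Integrable ρ)
    (hρ1 : ∫ x, ρ x = 1)
    (hint : Integrable (fun x => ρ x • g x))
    (t : ℝ) (Pc : EuclideanSpace ℝ (Fin m))
    (hbary : ∫ x, ρ x • g x = (-(t / (1 - t))) • Pc) :
    (-(t / (1 - t))) • Pc ∈ S := by
  by_contra hb
  set b := (-(t / (1 - t))) • Pc with hbdef
  -- separating hyperplane
  obtain ⟨f, hf⟩ := geometric_hahn_banach_open_point hconv hopen hb
  have hfb : f b = ∫ x, f (ρ x • g x) := by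
    rw [← hbary, ContinuousLinearMap.integral_comp_comm f hint]
  have hint2 : Integrable (fun x => f (ρ x • g x)) :=
    ContinuousLinearMap.integrable_comp f hint
  -- the nonnegative function with zero integral
  set h : EuclideanSpace ℝ (Fin m) → ℝ := fun x => ρ x * f b - f (ρ x • g x) with hh
  have hpos : ∀ x, 0 < h x := by
    intro x
    have h1 : f (g x) < f b := hf _ (hgS x)
    have : f (ρ x • g x) = ρ x * f (g x) := by simp
    rw [hh]
    simp only [this]
    nlinarith [hρpos x]
  have hinth : Integrable h := (hρint.mul_const (f b)).sub hint2
  have hzero : ∫ x, h x = 0 := by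
    rw [hh]
    rw [integral_sub (hρint.mul_const (f b)) hint2, integral_mul_const, hρ1, ← hfb]
    ring
  have hae : h =ᵐ[volume] 0 := by
    have := (integral_eq_zero_iff_of_nonneg (fun x => (hpos x).le) hinth).mp hzero
    exact this
  have huniv : {x | ¬ h x = (0:ℝ)} = Set.univ :=
    Set.eq_univ_of_forall fun x => (hpos x).ne'
  have hμ : (volume : Measure (EuclideanSpace ℝ (Fin m))) = 0 := by
    have h0 := hae
    rw [Filter.EventuallyEq, ae_iff] at h0
    simp only [Pi.zero_apply] at h0
    rw [huniv] at h0
    exact Measure.measure_univ_eq_zero.mp h0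
  have : (1:ℝ) = 0 := by
    rw [← hρ1, hμ, integral_zero_measure]
  norm_num at this
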